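/- Let A = k°[t_0,…,t_l]/(t_0⋯t_m − π) with 0 ≠ π ∈ k°, q = (k°°, t_0, …, t_l) the prime ideal generated by the maximal ideal k°° of k° and all t_i, and R = A_q. For a nonzero a ∈ A with special representation Σ a_n t^n, the following are equivalent: (a) a is a unit in R; (b) |a_0| = 1; (c) for every r ∈ Δ, |a|_r := max_n |a_n| r^n equals 1. -/

import Mathlib

/-!
Each special monomial `a_n t^n = b·π^D t^n` is, in `A`, an honest monomial `b·t^e` with `e ≠ 0`
when `n ≠ 0`, hence lies in `q`. So `a ≡ a₀ mod q`, and `a` is a unit in `A_q` iff `a₀ ∉ q`,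
i.e. iff `|a₀| = 1`. For `r ∈ Δ` the relation `r₀⋯r_m = |π|` gives `|a_n| r^n = |b|·r^e ≤ 1`,
and at the constant point `r_i = |π|^{1/(m+1)} < 1` this is `< 1` for every `n ≠ 0`;
so `max_n |a_n| r^n = 1` on all of `Δ` iff `|a₀| = 1`.
-/

open scoped NNReal
open MvPolynomial

noncomputable section

namespace Altered

variable {k : Type*} [Field k]

/-- The defining ideal (t₀⋯t_m - π) of a model semistable scheme. -/
def modelIdeal (v : Valuation k ℝ≥0) (l m : ℕ) (π : v.integer) :
    Ideal (MvPolynomial (Fin (l + 1)) v.integer) :=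
  Ideal.span
    {(∏ i ∈ Finset.univ.filter (fun i : Fin (l + 1) => (i : ℕ) ≤ m), X i) - C π}

/-- The coordinate ring A = k°[t₀,…,t_l]/(t₀⋯t_m − π) of a model semistable scheme. -/
abbrev ModelRing (v : Valuation k ℝ≥0) (l m : ℕ) (π : v.integer) :=
  MvPolynomial (Fin (l + 1)) v.integer ⧸ modelIdeal v l m π

variable (v : Valuation k ℝ≥0) (l m : ℕ) (π : v.integer)

/-- An exponent tuple n ∈ ℤ^m × ℕ^(l-m): index j : Fin l stands for the variable
t_{j+1}, and exponents of t_{j+1} for j ≥ m must be nonnegative. -/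
def IsSpecialIndex (n : Fin l → ℤ) : Prop := ∀ j : Fin l, m ≤ (j : ℕ) → 0 ≤ n j

/-- D(n) = −min(0, n₁,…,n_m). -/
def negDeg (n : Fin l → ℤ) : ℕ :=
  (Finset.univ.filter (fun j : Fin l => (j : ℕ) < m)).sup fun j => (-n j).toNat

/-- The special monomial a_n t^n with coefficient a_n = b·π^{D(n)}
(so that the bound |a_n| ≤ |π|^{−min(0,n₁,…,n_m)} holds automatically),
written as an honest element of A: b·π^{D}·t^n = b·t₀^D·∏_{1≤i≤m} t_i^{n_i+D}·∏_{i>m} t_i^{n_i}. -/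
def specialMonomial (b : v.integer) (n : Fin l → ℤ) : ModelRing v l m π :=
  Ideal.Quotient.mk (modelIdeal v l m π)
    (C b * X (0 : Fin (l + 1)) ^ negDeg l m n *
      ∏ j : Fin l, X j.succ ^
        (if (j : ℕ) < m then (n j + negDeg l m n).toNat else (n j).toNat))

/-- The set Δ of monomial semivaluation parameters:
r ∈ [0,1]^{l+1} with r₀⋯r_m = |π|. -/
def Delta : Set (Fin (l + 1) → ℝ≥0) :=
  {r | (∀ i, r i ≤ 1) ∧
    ∏ i ∈ Finset.univ.filter (fun i : Fin (l + 1) => (i : ℕ) ≤ m), r i = v (π : k)}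

/-- The value |a_n t^n|_r = |a_n|·r^n of the special monomial with coefficient
a_n = b·π^{D(n)} at r ∈ Δ.  (On Δ, r_i ≠ 0 whenever a negative exponent occurs.) -/
def monValue (b : v.integer) (n : Fin l → ℤ) (r : Fin (l + 1) → ℝ≥0) : ℝ≥0 :=
  v (b : k) * v (π : k) ^ (negDeg l m n : ℤ) * ∏ j : Fin l, r j.succ ^ (n j)

end Altered

namespace Altered

variable {k : Type*} [Field k] (v : Valuation k ℝ≥0) (l m : ℕ) (π : v.integer)

/-- The prime q = (k°°, t₀,…,t_l) of A, the origin of the model scheme. -/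
def originIdeal : Ideal (ModelRing v l m π) :=
  Ideal.span
    ((Set.range fun i : Fin (l + 1) =>
        Ideal.Quotient.mk (modelIdeal v l m π) (X i)) ∪
      ((fun c : v.integer =>
        Ideal.Quotient.mk (modelIdeal v l m π) (C c)) '' {c | v (c : k) < 1}))

end Altered

namespace Altered

section

variable {k : Type*} [Field k] (v : Valuation k ℝ≥0) (l m : ℕ) (π : v.integer)

section Exponents

variable {l m}

lemma neg_le_negDeg {n : Fin l → ℤ} {j : Fin l} (hj : (j : ℕ) < m) : -n j ≤ negDeg l m n := by
  have : (-n j).toNat ≤ negDeg l m n :=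
    Finset.le_sup (f := fun j : Fin l => (-n j).toNat) (by simp [hj])
  omega

variable (l m) in
lemma negDeg_zero : negDeg l m 0 = 0 := by
  simp [negDeg]

variable (l m) in
def specialExponent (n : Fin l → ℤ) : Fin (l + 1) → ℕ :=
  Fin.cons (negDeg l m n) fun j => if (j : ℕ) < m then (n j + negDeg l m n).toNat else (n j).toNat

lemma specialExponent_ne_zero {n : Fin l → ℤ} (hn : IsSpecialIndex l m n) (h0 : n ≠ 0) :
    specialExponent l m n ≠ 0 := by
  intro he
  have hD : negDeg l m n = 0 := congr_fun he 0
  refine h0 (funext fun j => ?_)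
  have hj : (if (j : ℕ) < m then (n j + negDeg l m n).toNat else (n j).toNat) = 0 :=
    congr_fun he j.succ
  have hnonneg : 0 ≤ n j := by
    rcases lt_or_ge (j : ℕ) m with hjm | hjm
    · linarith [neg_le_negDeg (n := n) hjm, hD]
    · exact hn j hjm
  rw [hD] at hj
  split_ifs at hj <;> simp only [Pi.zero_apply] <;> omega

end Exponents

lemma specialMonomial_eq (b : v.integer) (n : Fin l → ℤ) :
    specialMonomial v l m π b n =
      Ideal.Quotient.mk (modelIdeal v l m π) (C b * ∏ i, X i ^ specialExponent l m n i) := by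
  simp only [specialMonomial, specialExponent, Fin.prod_univ_succ, Fin.cons_zero, Fin.cons_succ,
    mul_assoc]

lemma specialMonomial_zero (b : v.integer) :
    specialMonomial v l m π b 0 = Ideal.Quotient.mk (modelIdeal v l m π) (C b) := by
  simp [specialMonomial, negDeg_zero]

lemma monValue_zero (b : v.integer) (r : Fin (l + 1) → ℝ≥0) :
    monValue v l m π b 0 r = v (b : k) := by
  simp [monValue, negDeg_zero]

section OriginIdeal

lemma mk_X_mem_originIdeal (i : Fin (l + 1)) :
    Ideal.Quotient.mk (modelIdeal v l m π) (X i) ∈ originIdeal v l m π :=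
  Ideal.subset_span (Or.inl ⟨i, rfl⟩)

lemma mk_C_mem_originIdeal_iff [(originIdeal v l m π).IsPrime] (b : v.integer) :
    Ideal.Quotient.mk (modelIdeal v l m π) (C b) ∈ originIdeal v l m π ↔ v (b : k) < 1 := by
  refine ⟨fun hb => lt_of_le_of_ne b.2 fun h1 => ?_,
    fun hb => Ideal.subset_span (Or.inr ⟨b, hb, rfl⟩)⟩
  have hu : IsUnit b := (Valuation.integer.integers v).isUnit_of_one' h1
  exact Ideal.IsPrime.ne_top ‹_› (Ideal.eq_top_of_isUnit_mem _ hb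
    (hu.map ((Ideal.Quotient.mk (modelIdeal v l m π)).comp C)))

lemma mk_prod_X_eq_mk_C :
    Ideal.Quotient.mk (modelIdeal v l m π)
      (∏ i ∈ Finset.univ.filter (fun i : Fin (l + 1) => (i : ℕ) ≤ m), X i) =
      Ideal.Quotient.mk (modelIdeal v l m π) (C π) :=
  Ideal.Quotient.eq.mpr (Ideal.subset_span rfl)

lemma valuation_pi_lt_one [(originIdeal v l m π).IsPrime] : v (π : k) < 1 := by
  have h0 : (0 : Fin (l + 1)) ∈ Finset.univ.filter (fun i : Fin (l + 1) => (i : ℕ) ≤ m) := by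
    simp
  rw [← mk_C_mem_originIdeal_iff v l m π, ← mk_prod_X_eq_mk_C, ← Finset.prod_erase_mul _ _ h0,
    map_mul]
  exact Ideal.mul_mem_left _ _ (mk_X_mem_originIdeal v l m π 0)

lemma specialMonomial_mem_originIdeal (b : v.integer) {n : Fin l → ℤ}
    (hn : IsSpecialIndex l m n) (h0 : n ≠ 0) :
    specialMonomial v l m π b n ∈ originIdeal v l m π := by
  obtain ⟨i, hi⟩ := Function.ne_iff.1 (specialExponent_ne_zero hn h0)
  have hdvd : X i ∣ C b * ∏ i, X i ^ specialExponent l m n i :=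
    (dvd_pow_self _ hi).trans ((Finset.dvd_prod_of_mem _ (Finset.mem_univ i)).mul_left _)
  rw [specialMonomial_eq]
  exact Ideal.mem_of_dvd _ (map_dvd (Ideal.Quotient.mk _) hdvd) (mk_X_mem_originIdeal v l m π i)

lemma sum_specialMonomial_eq_add (c : (Fin l → ℤ) →₀ v.integer) :
    ∑ n ∈ c.support, specialMonomial v l m π (c n) n =
      Ideal.Quotient.mk (modelIdeal v l m π) (C (c 0)) +
        ∑ n ∈ c.support.erase 0, specialMonomial v l m π (c n) n := by
  rw [← specialMonomial_zero]
  by_cases h : (0 : Fin l → ℤ) ∈ c.support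
  · exact (Finset.add_sum_erase _ _ h).symm
  · rw [Finset.erase_eq_of_notMem h, Finsupp.notMem_support_iff.mp h]
    simp [specialMonomial]

lemma sum_specialMonomial_mem_originIdeal_iff [(originIdeal v l m π).IsPrime]
    (c : (Fin l → ℤ) →₀ v.integer) (hsp : ∀ n ∈ c.support, IsSpecialIndex l m n) :
    ∑ n ∈ c.support, specialMonomial v l m π (c n) n ∈ originIdeal v l m π ↔
      v ((c 0 : v.integer) : k) < 1 := by
  have hrest : ∑ n ∈ c.support.erase 0, specialMonomial v l m π (c n) n ∈ originIdeal v l m π :=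
    Ideal.sum_mem _ fun n hn => specialMonomial_mem_originIdeal v l m π (c n)
      (hsp n (Finset.mem_of_mem_erase hn)) (Finset.ne_of_mem_erase hn)
  rw [sum_specialMonomial_eq_add, Ideal.add_mem_iff_left _ hrest, mk_C_mem_originIdeal_iff]

end OriginIdeal

section Delta

variable {v l m π}

lemma ne_zero_of_mem_Delta {r : Fin (l + 1) → ℝ≥0} (hr : r ∈ Delta v l m π) (hπ : v (π : k) ≠ 0)
    {i : Fin (l + 1)} (hi : (i : ℕ) ≤ m) : r i ≠ 0 := fun h0 =>
  hπ (hr.2 ▸ Finset.prod_eq_zero (by simp [hi]) h0)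

lemma exists_const_mem_Delta (hπ : v (π : k) < 1) :
    ∃ ε : ℝ≥0, ε < 1 ∧ (fun _ => ε) ∈ Delta v l m π := by
  set N := (Finset.univ.filter fun i : Fin (l + 1) => (i : ℕ) ≤ m).card
  have hN : N ≠ 0 := (Finset.card_pos.2 ⟨0, by simp⟩).ne'
  have hε : v (π : k) ^ (N⁻¹ : ℝ) < 1 := NNReal.rpow_lt_one hπ (by positivity)
  exact ⟨_, hε, fun _ => hε.le, by rw [Finset.prod_const, NNReal.rpow_inv_natCast_pow _ hN]⟩

lemma monValue_eq_of_mem_Delta (hπ : v (π : k) ≠ 0) (b : v.integer) {n : Fin l → ℤ}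
    (hn : IsSpecialIndex l m n) {r : Fin (l + 1) → ℝ≥0} (hr : r ∈ Delta v l m π) :
    monValue v l m π b n r = v (b : k) * ∏ i, r i ^ specialExponent l m n i := by
  have hπr : v (π : k) = r 0 * ∏ j : Fin l, if (j : ℕ) < m then r j.succ else 1 := by
    simp only [← hr.2, Finset.prod_filter, Fin.prod_univ_succ, Fin.val_zero, Nat.zero_le, if_true,
      Fin.val_succ, Nat.succ_le_iff]
  have hfactor (j : Fin l) :
      (if (j : ℕ) < m then r j.succ else 1) ^ (negDeg l m n : ℤ) * r j.succ ^ n j =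
        r j.succ ^ (if (j : ℕ) < m then (n j + negDeg l m n).toNat else (n j).toNat) := by
    split_ifs with hj
    · have hrj : r j.succ ≠ 0 := ne_zero_of_mem_Delta hr hπ (by simpa using hj)
      rw [← zpow_add₀ hrj, ← zpow_natCast, add_comm,
        Int.toNat_of_nonneg (by linarith [neg_le_negDeg (n := n) hj])]
    · rw [one_zpow, one_mul, ← zpow_natCast, Int.toNat_of_nonneg (hn j (not_lt.1 hj))]
  rw [monValue, hπr, mul_zpow, ← Finset.prod_zpow, mul_assoc, mul_assoc,
    ← Finset.prod_mul_distrib, Finset.prod_congr rfl fun j _ => hfactor j, Fin.prod_univ_succ]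
  simp only [specialExponent, Fin.cons_zero, Fin.cons_succ, zpow_natCast]

lemma monValue_le_one (hπ : v (π : k) ≠ 0) (b : v.integer) {n : Fin l → ℤ}
    (hn : IsSpecialIndex l m n) {r : Fin (l + 1) → ℝ≥0} (hr : r ∈ Delta v l m π) :
    monValue v l m π b n r ≤ 1 := by
  rw [monValue_eq_of_mem_Delta hπ b hn hr]
  exact mul_le_one' b.2 (Finset.prod_le_one' fun i _ => pow_le_one' (hr.1 i) _)

lemma monValue_const_lt_one (hπ : v (π : k) ≠ 0) (b : v.integer) {n : Fin l → ℤ}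
    (hn : IsSpecialIndex l m n) (h0 : n ≠ 0) {ε : ℝ≥0} (hε : ε < 1)
    (hΔ : (fun _ => ε) ∈ Delta v l m π) :
    monValue v l m π b n (fun _ => ε) < 1 := by
  rw [monValue_eq_of_mem_Delta hπ b hn hΔ, Finset.prod_pow_eq_pow_sum]
  have hdeg : ∑ i, specialExponent l m n i ≠ 0 := by
    obtain ⟨i, hi⟩ := Function.ne_iff.1 (specialExponent_ne_zero hn h0)
    exact fun hsum => hi ((Finset.sum_eq_zero_iff.1 hsum) i (Finset.mem_univ i))
  exact (mul_le_of_le_one_left' b.2).trans_lt (pow_lt_one₀ zero_le hε hdeg)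

lemma sup_monValue_eq_one (hπ : v (π : k) ≠ 0) (c : (Fin l → ℤ) →₀ v.integer)
    (hsp : ∀ n ∈ c.support, IsSpecialIndex l m n) (h0 : v ((c 0 : v.integer) : k) = 1)
    {r : Fin (l + 1) → ℝ≥0} (hr : r ∈ Delta v l m π) :
    (c.support.sup fun n => monValue v l m π (c n) n r) = 1 := by
  have hmem : (0 : Fin l → ℤ) ∈ c.support :=
    Finsupp.mem_support_iff.2 fun hc => by simp [hc] at h0
  refine le_antisymm (Finset.sup_le fun n hn => monValue_le_one hπ (c n) (hsp n hn) hr) ?_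
  calc 1 = monValue v l m π (c 0) 0 r := by rw [monValue_zero, h0]
    _ ≤ _ := Finset.le_sup (f := fun n => monValue v l m π (c n) n r) hmem

lemma valuation_coeff_zero_eq_one_of_sup_monValue (hπ : v (π : k) ≠ 0) (hπ1 : v (π : k) < 1)
    (c : (Fin l → ℤ) →₀ v.integer) (hsp : ∀ n ∈ c.support, IsSpecialIndex l m n)
    (h : ∀ r ∈ Delta v l m π, (c.support.sup fun n => monValue v l m π (c n) n r) = 1) :
    v ((c 0 : v.integer) : k) = 1 := by
  obtain ⟨ε, hε, hΔ⟩ := exists_const_mem_Delta hπ1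
  have hsup := h _ hΔ
  have hne : c.support.Nonempty := Finset.nonempty_iff_ne_empty.2 fun h0 => by simp [h0] at hsup
  obtain ⟨n, hn, hmax⟩ := Finset.exists_mem_eq_sup c.support hne
    fun n => monValue v l m π (c n) n fun _ => ε
  rw [hmax] at hsup
  by_cases h0 : n = 0
  · rwa [h0, monValue_zero] at hsup
  · exact absurd hsup (monValue_const_lt_one hπ (c n) (hsp n hn) h0 hε hΔ).ne

end Delta

end

theorem unit_in_local_ring_iff_general
    {k : Type*} [Field k] (v : Valuation k ℝ≥0)
    (l m : ℕ) (π : v.integer) (hπ : π ≠ 0)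
    [hq : (originIdeal v l m π).IsPrime]
    (a : ModelRing v l m π)
    (c : (Fin l → ℤ) →₀ v.integer)
    (hsp : ∀ n ∈ c.support, IsSpecialIndex l m n)
    (hrep : a = ∑ n ∈ c.support, specialMonomial v l m π (c n) n) :
    List.TFAE
      [IsUnit (@algebraMap (ModelRing v l m π)
          (Localization.AtPrime (R := ModelRing v l m π) (originIdeal v l m π))
          (Ideal.Quotient.commSemiring _) _ _ a),
       v ((c (0 : Fin l → ℤ) : v.integer) : k) = 1,
       ∀ r ∈ Delta v l m π,
         (c.support.sup fun n => monValue v l m π (c n) n r) = 1] := by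
  have hπ0 : v (π : k) ≠ 0 := v.ne_zero_iff.2 (by exact_mod_cast hπ)
  tfae_have 1 ↔ 2 := by
    rw [IsLocalization.AtPrime.isUnit_to_map_iff _ (originIdeal v l m π), Ideal.mem_primeCompl_iff,
      hrep, sum_specialMonomial_mem_originIdeal_iff v l m π c hsp, not_lt]
    exact ⟨le_antisymm (c 0).2, ge_of_eq⟩
  tfae_have 2 → 3 := fun h r hr => sup_monValue_eq_one hπ0 c hsp h hr
  tfae_have 3 → 2 :=
    valuation_coeff_zero_eq_one_of_sup_monValue hπ0 (valuation_pi_lt_one v l m π) c hsp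
  tfae_finish

theorem unit_in_local_ring_iff
    {k : Type*} [Field k] (v : Valuation k ℝ≥0)
    (hv : ∃ x : k, v x ≠ 0 ∧ v x ≠ 1)
    (l m : ℕ) (hm : m ≤ l) (π : v.integer) (hπ : π ≠ 0)
    [hq : (originIdeal v l m π).IsPrime]
    (a : ModelRing v l m π) (ha : a ≠ 0)
    (c : (Fin l → ℤ) →₀ v.integer)
    (hsp : ∀ n ∈ c.support, IsSpecialIndex l m n)
    (hrep : a = ∑ n ∈ c.support, specialMonomial v l m π (c n) n) :
    List.TFAE
      [IsUnit (@algebraMap (ModelRing v l m π)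
          (Localization.AtPrime (R := ModelRing v l m π) (originIdeal v l m π))
          (Ideal.Quotient.commSemiring _) _ _ a),
       v ((c (0 : Fin l → ℤ) : v.integer) : k) = 1,
       ∀ r ∈ Delta v l m π,
         (c.support.sup fun n => monValue v l m π (c n) n r) = 1] :=
  unit_in_local_ring_iff_general v l m π hπ (hq := hq) a c hsp hrep

end Altered
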